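/- Assume a d-uniform hypergraph G with d-dimensional adjacency matrix A_G covers a hypergraph H with d-dimensional adjacency matrix A_H. Then for every perfect coloring of H with d-dimensional parameter matrix S there exists a perfect coloring of G with the same parameter matrix S; concretely, if R is the color matrix of the covering (so A_G ∘ R = R ∘ A_H) and P is the color matrix of a perfect coloring of H with A_H ∘ P = P ∘ S, then RP is the color matrix of a perfect coloring of G with A_G ∘ (RP) = (RP) ∘ S. -/
import Mathlib


open Finset

/-- The product `A ∘ P` of a `(t+1)`-dimensional matrix `A` of order `n`
(presented with a distinguished first index and `t` further indices) with a
`2`-dimensional matrix `P`: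
`(A ∘ P)_{i,β} = ∑_{g : [t] → [n]} a_{i,g} ∏_j p_{g j, β j}`. -/
def mdMulMat {n k t : ℕ} (A : Fin n → (Fin t → Fin n) → ℝ)
    (P : Matrix (Fin n) (Fin k) ℝ) : Fin n → (Fin t → Fin k) → ℝ :=
  fun i β => ∑ g : Fin t → Fin n, A i g * ∏ j, P (g j) (β j)

/-- The product `P ∘ S` of a `2`-dimensional matrix `P` with a `(t+1)`-dimensional
matrix `S`: `(P ∘ S)_{i,β} = ∑_c p_{i,c} s_{c,β}`. -/
def matMulMd {n k t : ℕ} (P : Matrix (Fin n) (Fin k) ℝ)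
    (S : Fin k → (Fin t → Fin k) → ℝ) : Fin n → (Fin t → Fin k) → ℝ :=
  fun i β => ∑ c : Fin k, P i c * S c β

/-- The product `A ∘ x` of a `(t+1)`-dimensional matrix with a vector:
`(A ∘ x)_i = ∑_{i₂,…,i_d} a_{i,i₂,…,i_d} x_{i₂} ⋯ x_{i_d}`. -/
def mdMulVec {n t : ℕ} (A : Fin n → (Fin t → Fin n) → ℝ) (x : Fin n → ℝ) :
    Fin n → ℝ :=
  fun i => ∑ g : Fin t → Fin n, A i g * ∏ j, x (g j)

/-- The color matrix of a coloring `f`. -/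
def colorMatrix {n k : ℕ} (f : Fin n → Fin k) : Matrix (Fin n) (Fin k) ℝ :=
  Matrix.of fun x i => if f x = i then 1 else 0

/-- The `(t+1)`-dimensional adjacency matrix of a `(t+1)`-uniform hypergraph on `n`
vertices: the entry at `α` is `1/t!` if the components of `α` are `t+1` distinct
vertices forming a hyperedge, and `0` otherwise. -/
noncomputable def adjMatrix (t : ℕ) {n : ℕ} (edges : Finset (Finset (Fin n))) :
    Fin n → (Fin t → Fin n) → ℝ :=
  fun i g =>
    if Function.Injective (Fin.cons i g : Fin (t + 1) → Fin n)
        ∧ Finset.univ.image (Fin.cons i g) ∈ edges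
    then ((t.factorial : ℝ))⁻¹ else 0

/-- The multiset of color ranges of the hyperedges incident to the vertex `x`. -/
def incidentRanges {n k : ℕ} (edges : Finset (Finset (Fin n))) (f : Fin n → Fin k)
    (x : Fin n) : Multiset (Multiset (Fin k)) :=
  (edges.filter fun e => x ∈ e).val.map fun e => e.val.map f

/-- A coloring is perfect if any two vertices of the same color have the same
multiset of color ranges of their incident hyperedges. -/
def IsPerfect {n k : ℕ} (edges : Finset (Finset (Fin n))) (f : Fin n → Fin k) : Prop :=
  ∀ x y, f x = f y → incidentRanges edges f x = incidentRanges edges f y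


section Aux

lemma colorMatrix_mul {n m k : ℕ} (f : Fin n → Fin m) (g : Fin m → Fin k) :
    colorMatrix f * colorMatrix g = colorMatrix (g ∘ f) := by
  ext x c
  simp only [Matrix.mul_apply, colorMatrix, Matrix.of_apply, ite_mul, one_mul, zero_mul,
    Function.comp]
  rw [Finset.sum_eq_single (f x)] <;> simp +contextual [eq_comm]

lemma exists_enum {m t : ℕ} (s : Finset (Fin m)) (x : Fin m) (hx : x ∈ s)
    (hcard : s.card = t + 1) :
    ∃ g : Fin t → Fin m, Function.Injective (Fin.cons x g : Fin (t+1) → Fin m) ∧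
      Finset.univ.image (Fin.cons x g) = s := by
  have hcard' : (s.erase x).card = t := by
    rw [Finset.card_erase_of_mem hx, hcard]; omega
  let e := (s.erase x).orderIsoOfFin hcard'
  set g : Fin t → Fin m := fun j => (e j : Fin m) with hg
  have hgmem : ∀ j, g j ∈ s.erase x := fun j => (e j).2
  have hginj : Function.Injective g :=
    Subtype.val_injective.comp (e.toEquiv.injective)
  have hinj : Function.Injective (Fin.cons x g : Fin (t+1) → Fin m) := by
    rw [Fin.cons_injective_iff]
    refine ⟨?_, hginj⟩
    intro hmem
    obtain ⟨j, hj⟩ := hmem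
    exact (Finset.mem_erase.mp (hgmem j)).1 hj
  refine ⟨g, hinj, ?_⟩
  apply Finset.eq_of_subset_of_card_le
  · intro a ha
    obtain ⟨j, _, rfl⟩ := Finset.mem_image.mp ha
    refine Fin.cases hx (fun j => Finset.mem_of_mem_erase (hgmem j)) j
  · rw [Finset.card_image_of_injective _ hinj, hcard, Finset.card_univ, Fintype.card_fin]

lemma md_assoc {nG nH k t : ℕ}
    (AG : Fin nG → (Fin t → Fin nG) → ℝ) (AH : Fin nH → (Fin t → Fin nH) → ℝ)
    (R : Matrix (Fin nG) (Fin nH) ℝ) (P : Matrix (Fin nH) (Fin k) ℝ)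
    (S : Fin k → (Fin t → Fin k) → ℝ)
    (hcov : mdMulMat AG R = matMulMd R AH)
    (hS : mdMulMat AH P = matMulMd P S) :
    mdMulMat AG (R * P) = matMulMd (R * P) S := by
  funext i β
  have key : ∀ g : Fin t → Fin nG,
      (∏ j, (R * P) (g j) (β j)) = ∑ γ : Fin t → Fin nH,
        ∏ j, R (g j) (γ j) * P (γ j) (β j) := by
    intro g
    simp only [Matrix.mul_apply]
    rw [Finset.prod_univ_sum (fun _ => Finset.univ)
      (fun j c => R (g j) c * P c (β j)), Fintype.piFinset_univ]
  calc (mdMulMat AG (R * P)) i β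
      = ∑ g : Fin t → Fin nG, ∑ γ : Fin t → Fin nH,
          (AG i g * ∏ j, R (g j) (γ j)) * ∏ j, P (γ j) (β j) := by
        refine Finset.sum_congr rfl fun g _ => ?_
        rw [key g, Finset.mul_sum]
        exact Finset.sum_congr rfl fun γ _ => by rw [Finset.prod_mul_distrib]; ring
    _ = ∑ γ : Fin t → Fin nH, (∑ g : Fin t → Fin nG,
          AG i g * ∏ j, R (g j) (γ j)) * ∏ j, P (γ j) (β j) := by
        rw [Finset.sum_comm]
        exact Finset.sum_congr rfl fun γ _ => (Finset.sum_mul ..).symm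
    _ = ∑ γ : Fin t → Fin nH, (∑ y, R i y * AH y γ) * ∏ j, P (γ j) (β j) := by
        refine Finset.sum_congr rfl fun γ _ => ?_
        have h := congrFun (congrFun hcov i) γ
        simp only [mdMulMat, matMulMd] at h
        rw [h]
    _ = ∑ y, R i y * ∑ γ : Fin t → Fin nH, AH y γ * ∏ j, P (γ j) (β j) := by
        simp only [Finset.sum_mul]
        rw [Finset.sum_comm]
        simp only [Finset.mul_sum]
        exact Finset.sum_congr rfl fun y _ => Finset.sum_congr rfl fun γ _ => by ring
    _ = ∑ y, R i y * ∑ c, P y c * S c β := by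
        refine Finset.sum_congr rfl fun y _ => ?_
        have h := congrFun (congrFun hS y) β
        simp only [mdMulMat, matMulMd] at h
        rw [h]
    _ = ∑ c, (∑ y, R i y * P y c) * S c β := by
        simp only [Finset.mul_sum]
        rw [Finset.sum_comm]
        simp only [Finset.sum_mul]
        exact Finset.sum_congr rfl fun c _ => Finset.sum_congr rfl fun y _ => by ring
    _ = (matMulMd (R * P) S) i β := by
        simp only [matMulMd, Matrix.mul_apply]

lemma count_lemma {nG nH t : ℕ} (edgesG : Finset (Finset (Fin nG)))
    (edgesH : Finset (Finset (Fin nH))) (φ : Fin nG → Fin nH)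
    (hcov : mdMulMat (adjMatrix t edgesG) (colorMatrix φ)
        = matMulMd (colorMatrix φ) (adjMatrix t edgesH))
    (i : Fin nG) (γ : Fin t → Fin nH) :
    (Finset.univ.filter fun g : Fin t → Fin nG =>
        (Function.Injective (Fin.cons i g : Fin (t+1) → Fin nG)
          ∧ Finset.univ.image (Fin.cons i g) ∈ edgesG) ∧ φ ∘ g = γ).card
      = if Function.Injective (Fin.cons (φ i) γ : Fin (t+1) → Fin nH)
          ∧ Finset.univ.image (Fin.cons (φ i) γ) ∈ edgesH then 1 else 0 := by
  have h := congrFun (congrFun hcov i) γ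
  have hfac : ((t.factorial : ℝ))⁻¹ ≠ 0 :=
    inv_ne_zero (Nat.cast_ne_zero.mpr t.factorial_ne_zero)
  have hrhs : matMulMd (colorMatrix φ) (adjMatrix t edgesH) i γ
      = adjMatrix t edgesH (φ i) γ := by
    simp only [matMulMd, colorMatrix, Matrix.of_apply, ite_mul, one_mul, zero_mul]
    rw [Finset.sum_eq_single (φ i)] <;> simp +contextual [eq_comm]
  have hlhs : mdMulMat (adjMatrix t edgesG) (colorMatrix φ) i γ
      = ((Finset.univ.filter fun g : Fin t → Fin nG =>
          (Function.Injective (Fin.cons i g : Fin (t+1) → Fin nG)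
            ∧ Finset.univ.image (Fin.cons i g) ∈ edgesG) ∧ φ ∘ g = γ).card : ℝ)
          * (t.factorial : ℝ)⁻¹ := by
    simp only [mdMulMat, colorMatrix, Matrix.of_apply, adjMatrix, Finset.prod_boole,
      Finset.mem_univ, forall_true_left, ite_mul, one_mul, mul_zero, mul_ite, mul_one]
    rw [← Finset.sum_boole, Finset.sum_mul]
    refine Finset.sum_congr rfl fun g _ => ?_
    rw [ite_mul, one_mul, zero_mul]
    by_cases hA : ∀ j, φ (g j) = γ j
    · simp [hA, funext_iff]
    · simp [hA, funext_iff]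
  rw [hlhs, hrhs] at h
  by_cases hc : Function.Injective (Fin.cons (φ i) γ : Fin (t+1) → Fin nH)
      ∧ Finset.univ.image (Fin.cons (φ i) γ) ∈ edgesH
  · rw [if_pos hc]
    rw [adjMatrix, if_pos hc] at h
    field_simp at h
    exact_mod_cast h
  · rw [if_neg hc]
    rw [adjMatrix, if_neg hc] at h
    rcases mul_eq_zero.mp h with h0 | h0
    · exact_mod_cast h0
    · exact absurd h0 hfac

lemma incident_eq {nG nH k t : ℕ} (edgesG : Finset (Finset (Fin nG)))
    (huG : ∀ e ∈ edgesG, e.card = t + 1)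
    (edgesH : Finset (Finset (Fin nH))) (huH : ∀ u ∈ edgesH, u.card = t + 1)
    (φ : Fin nG → Fin nH)
    (count : ∀ (i : Fin nG) (γ : Fin t → Fin nH),
      (Finset.univ.filter fun g : Fin t → Fin nG =>
        (Function.Injective (Fin.cons i g : Fin (t+1) → Fin nG)
          ∧ Finset.univ.image (Fin.cons i g) ∈ edgesG) ∧ φ ∘ g = γ).card
      = if Function.Injective (Fin.cons (φ i) γ : Fin (t+1) → Fin nH)
          ∧ Finset.univ.image (Fin.cons (φ i) γ) ∈ edgesH then 1 else 0)
    (p : Fin nH → Fin k) (i : Fin nG) :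
    incidentRanges edgesG (p ∘ φ) i = incidentRanges edgesH p (φ i) := by
  have condOf : ∀ e ∈ edgesG, i ∈ e → ∀ g : Fin t → Fin nG,
      Function.Injective (Fin.cons i g : Fin (t+1) → Fin nG) →
      Finset.univ.image (Fin.cons i g) = e →
      Function.Injective (Fin.cons (φ i) (φ ∘ g) : Fin (t+1) → Fin nH)
        ∧ Finset.univ.image (Fin.cons (φ i) (φ ∘ g)) ∈ edgesH := by
    intro e he hie g hginj hgim
    have hmem : g ∈ Finset.univ.filter fun g' : Fin t → Fin nG =>
        (Function.Injective (Fin.cons i g' : Fin (t+1) → Fin nG)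
          ∧ Finset.univ.image (Fin.cons i g') ∈ edgesG) ∧ φ ∘ g' = φ ∘ g := by
      refine Finset.mem_filter.mpr ⟨Finset.mem_univ _, ⟨hginj, ?_⟩, rfl⟩
      rw [hgim]; exact he
    have hcount := count i (φ ∘ g)
    by_contra hcon
    rw [if_neg hcon] at hcount
    have := Finset.card_pos.mpr ⟨g, hmem⟩
    omega
  have stepA : ∀ e ∈ edgesG, i ∈ e → Set.InjOn φ ↑e ∧ Finset.image φ e ∈ edgesH := by
    intro e he hie
    obtain ⟨g, hginj, hgim⟩ := exists_enum e i hie (huG e he)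
    obtain ⟨hcinj, hcim⟩ := condOf e he hie g hginj hgim
    rw [← Fin.comp_cons] at hcinj hcim
    constructor
    · intro a ha b hb hab
      have ha' : a ∈ Finset.univ.image (Fin.cons i g) := by
        rw [hgim]; exact Finset.mem_coe.mp ha
      have hb' : b ∈ Finset.univ.image (Fin.cons i g) := by
        rw [hgim]; exact Finset.mem_coe.mp hb
      obtain ⟨ja, -, rfl⟩ := Finset.mem_image.mp ha'
      obtain ⟨jb, -, rfl⟩ := Finset.mem_image.mp hb'
      exact congrArg _ (hcinj hab)
    · rw [← hgim, Finset.image_image]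
      exact hcim
  have stepB : ∀ e1 ∈ edgesG, ∀ e2 ∈ edgesG, i ∈ e1 → i ∈ e2 →
      Finset.image φ e1 = Finset.image φ e2 → e1 = e2 := by
    intro e1 he1 e2 he2 hi1 hi2 himeq
    obtain ⟨g1, hg1inj, hg1im⟩ := exists_enum e1 i hi1 (huG e1 he1)
    obtain ⟨hcinj, hcim⟩ := condOf e1 he1 hi1 g1 hg1inj hg1im
    have hγmem : ∀ j, (φ ∘ g1) j ∈ Finset.image φ e2 := by
      intro j
      rw [← himeq]
      refine Finset.mem_image_of_mem φ ?_
      rw [← hg1im]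
      have := Finset.mem_image_of_mem (Fin.cons i g1) (Finset.mem_univ j.succ)
      rwa [Fin.cons_succ] at this
    choose g2 hg2mem hg2φ using fun j => Finset.mem_image.mp (hγmem j)
    have hcomp2 : φ ∘ Fin.cons i g2 = Fin.cons (φ i) (φ ∘ g1) := by
      rw [Fin.comp_cons]
      have h12 : φ ∘ g2 = φ ∘ g1 := funext fun j => hg2φ j
      rw [h12]
    have hg2inj : Function.Injective (Fin.cons i g2 : Fin (t+1) → Fin nG) :=
      Function.Injective.of_comp (f := φ) (by rw [hcomp2]; exact hcinj)
    have hg2im : Finset.univ.image (Fin.cons i g2) = e2 := by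
      apply Finset.eq_of_subset_of_card_le
      · intro a ha
        obtain ⟨j, -, rfl⟩ := Finset.mem_image.mp ha
        exact Fin.cases hi2 (fun j => hg2mem j) j
      · rw [Finset.card_image_of_injective _ hg2inj, huG e2 he2, Finset.card_univ,
          Fintype.card_fin]
    have hcount := count i (φ ∘ g1)
    rw [if_pos ⟨hcinj, hcim⟩] at hcount
    have hmem1 : g1 ∈ Finset.univ.filter fun g' : Fin t → Fin nG =>
        (Function.Injective (Fin.cons i g' : Fin (t+1) → Fin nG)
          ∧ Finset.univ.image (Fin.cons i g') ∈ edgesG) ∧ φ ∘ g' = φ ∘ g1 := by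
      refine Finset.mem_filter.mpr ⟨Finset.mem_univ _, ⟨hg1inj, ?_⟩, rfl⟩
      rw [hg1im]; exact he1
    have hmem2 : g2 ∈ Finset.univ.filter fun g' : Fin t → Fin nG =>
        (Function.Injective (Fin.cons i g' : Fin (t+1) → Fin nG)
          ∧ Finset.univ.image (Fin.cons i g') ∈ edgesG) ∧ φ ∘ g' = φ ∘ g1 := by
      refine Finset.mem_filter.mpr ⟨Finset.mem_univ _, ⟨hg2inj, ?_⟩, funext fun j => hg2φ j⟩
      rw [hg2im]; exact he2
    have hg12 : g1 = g2 := Finset.card_le_one.mp (le_of_eq hcount) g1 hmem1 g2 hmem2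
    rw [← hg1im, hg12, hg2im]
  have stepC : (edgesG.filter fun e => i ∈ e).image (fun e => Finset.image φ e)
      = edgesH.filter fun u => φ i ∈ u := by
    apply Finset.Subset.antisymm
    · intro u hu
      obtain ⟨e, he, rfl⟩ := Finset.mem_image.mp hu
      obtain ⟨he1, he2⟩ := Finset.mem_filter.mp he
      exact Finset.mem_filter.mpr ⟨(stepA e he1 he2).2, Finset.mem_image_of_mem φ he2⟩
    · intro u hu
      obtain ⟨huH', hφiu⟩ := Finset.mem_filter.mp hu
      obtain ⟨γ, hγinj, hγim⟩ := exists_enum u (φ i) hφiu (huH u huH')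
      have hcount := count i γ
      rw [if_pos ⟨hγinj, by rw [hγim]; exact huH'⟩] at hcount
      obtain ⟨g, hg⟩ := Finset.card_eq_one.mp hcount
      have hgmem : g ∈ Finset.univ.filter fun g' : Fin t → Fin nG =>
          (Function.Injective (Fin.cons i g' : Fin (t+1) → Fin nG)
            ∧ Finset.univ.image (Fin.cons i g') ∈ edgesG) ∧ φ ∘ g' = γ := by
        rw [hg]; exact Finset.mem_singleton_self g
      obtain ⟨-, ⟨hginj, hgE⟩, hgφ⟩ := Finset.mem_filter.mp hgmem
      refine Finset.mem_image.mpr ⟨Finset.univ.image (Fin.cons i g),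
        Finset.mem_filter.mpr ⟨hgE, ?_⟩, ?_⟩
      · exact Finset.mem_image.mpr ⟨0, Finset.mem_univ _, Fin.cons_zero _ _⟩
      · rw [Finset.image_image, Fin.comp_cons, hgφ, hγim]
  have injOnImg : Set.InjOn (fun e => Finset.image φ e)
      ↑(edgesG.filter fun e => i ∈ e) := by
    intro e1 h1 e2 h2 h
    rw [Finset.mem_coe, Finset.mem_filter] at h1 h2
    exact stepB e1 h1.1 e2 h2.1 h1.2 h2.2 h
  unfold incidentRanges
  rw [← stepC, Finset.image_val_of_injOn injOnImg, Multiset.map_map]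
  refine Multiset.map_congr rfl ?_
  intro e he
  have he' : e ∈ edgesG.filter fun e => i ∈ e := he
  obtain ⟨heG, hie⟩ := Finset.mem_filter.mp he'
  simp only [Function.comp_apply]
  rw [Finset.image_val_of_injOn (stepA e heG hie).1, Multiset.map_map]
  rfl

end Aux

/-- Assume a `(t+1)`-uniform hypergraph `G` covers a `(t+1)`-uniform hypergraph `H`,
with color matrix `R = colorMatrix φ` of the covering satisfying `A_G ∘ R = R ∘ A_H`.
Then for every perfect coloring of `H` with color matrix `P = colorMatrix p` and
`(t+1)`-dimensional parameter matrix `S` (so `A_H ∘ P = P ∘ S`), the matrix `RP` is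
the color matrix of a perfect coloring of `G` with the same parameter matrix `S`:
`A_G ∘ (RP) = (RP) ∘ S`. -/

theorem stmt17 {nG nH k t : ℕ}
    (edgesG : Finset (Finset (Fin nG))) (huG : ∀ e ∈ edgesG, e.card = t + 1)
    (edgesH : Finset (Finset (Fin nH))) (huH : ∀ u ∈ edgesH, u.card = t + 1)
    (φ : Fin nG → Fin nH) (hφ : Function.Surjective φ)
    (hcov : mdMulMat (adjMatrix t edgesG) (colorMatrix φ)
        = matMulMd (colorMatrix φ) (adjMatrix t edgesH))
    (p : Fin nH → Fin k) (hp : Function.Surjective p)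
    (hperf : IsPerfect edgesH p)
    (S : Fin k → (Fin t → Fin k) → ℝ)
    (hS : mdMulMat (adjMatrix t edgesH) (colorMatrix p) = matMulMd (colorMatrix p) S) :
    Function.Surjective (p ∘ φ) ∧
    colorMatrix φ * colorMatrix p = colorMatrix (p ∘ φ) ∧
    IsPerfect edgesG (p ∘ φ) ∧
    mdMulMat (adjMatrix t edgesG) (colorMatrix φ * colorMatrix p)
      = matMulMd (colorMatrix φ * colorMatrix p) S := by
  have count := count_lemma edgesG edgesH φ hcov
  have hincident : ∀ i, incidentRanges edgesG (p ∘ φ) i = incidentRanges edgesH p (φ i) :=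
    fun i => incident_eq edgesG huG edgesH huH φ count p i
  refine ⟨hp.comp hφ, colorMatrix_mul φ p, ?_, ?_⟩
  · intro x y hxy
    rw [hincident x, hincident y]
    exact hperf (φ x) (φ y) hxy
  · exact md_assoc _ _ _ _ S hcov hS
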